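/- The J-function J(σ) = 1 - E[log₂(1 + e^{-Λ})], where Λ ~ N(σ²/2, σ²), is strictly increasing in σ on (0, ∞), with limit 0 as σ → 0⁺ and limit 1 as σ → ∞. -/

import Mathlib

/-!
Write `Λ = σ²/2 + σZ` with `Z` standard normal, so that `1 - J(σ) = E[ℓ(Λ)]` for the logistic
loss `ℓ(x) = log₂(1 + e⁻ˣ)`, whose derivative is `-(1 - sigmoid x) / log 2`. Differentiating under
the integral and applying Gaussian integration by parts `E[Z h(Z)] = E[h'(Z)]` to
`h(z) = 1 - sigmoid(σ²/2 + σz)` gives `d/dσ E[ℓ(Λ)] = -σ E[(1 - sigmoid Λ)²] / log 2 < 0`.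
At `σ = 0` the expectation is `ℓ(0) = 1` and it is continuous there; as `σ → ∞` it tends to `0` by
dominated convergence, with `ℓ(σ²/2 + σz) ≤ ℓ(-z²/2)` because `σ²/2 + σz ≥ -z²/2`.
-/

open MeasureTheory Real

/-- The J-function: `J(σ) = 1 - E[log₂(1 + e^{-Λ})]` where `Λ ~ N(σ²/2, σ²)`. -/
noncomputable def Jfun (σ : ℝ) : ℝ :=
  1 - ∫ x : ℝ, ProbabilityTheory.gaussianPDFReal (σ ^ 2 / 2) (Real.toNNReal (σ ^ 2)) x *
        Real.logb 2 (1 + Real.exp (-x))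

open Filter ProbabilityTheory Set
open scoped NNReal Topology

namespace ProbabilityTheory

lemma integrable_gaussianReal_iff {μ : ℝ} {v : ℝ≥0} (hv : v ≠ 0) {f : ℝ → ℝ} :
    Integrable f (gaussianReal μ v) ↔ Integrable (fun x ↦ gaussianPDFReal μ v x * f x) := by
  rw [gaussianReal_of_var_ne_zero _ hv, integrable_withDensity_iff_integrable_smul'
    (measurable_gaussianPDF _ _) (ae_of_all _ fun _ ↦ gaussianPDF_lt_top)]
  simp [gaussianPDF, ENNReal.toReal_ofReal (gaussianPDFReal_nonneg _ _ _)]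

lemma integrable_id_gaussianReal {μ : ℝ} {v : ℝ≥0} : Integrable id (gaussianReal μ v) :=
  (memLp_id_gaussianReal 1).integrable le_rfl

lemma gaussianPDFReal_zero_one (x : ℝ) :
    gaussianPDFReal 0 1 x = (√(2 * π))⁻¹ * rexp (-x ^ 2 / 2) := by
  simp [gaussianPDFReal]

lemma hasDerivAt_gaussianPDFReal_zero_one (x : ℝ) :
    HasDerivAt (gaussianPDFReal 0 1) (-x * gaussianPDFReal 0 1 x) x := by
  have h : HasDerivAt (fun y : ℝ ↦ -y ^ 2 / 2) (-x) x :=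
    ((hasDerivAt_pow 2 x).fun_neg.div_const 2).congr_deriv (by ring)
  have := h.exp.const_mul (√(2 * π))⁻¹
  simp only [← gaussianPDFReal_zero_one] at this
  exact this.congr_deriv (by rw [gaussianPDFReal_zero_one]; ring)

/-- **Stein's lemma** (Gaussian integration by parts). -/
theorem integral_mul_gaussianReal_eq_integral_deriv {h h' : ℝ → ℝ}
    (hderiv : ∀ x, HasDerivAt h (h' x) x) (hh : Integrable h (gaussianReal 0 1))
    (hxh : Integrable (fun x ↦ x * h x) (gaussianReal 0 1))
    (hh' : Integrable h' (gaussianReal 0 1)) :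
    ∫ x, x * h x ∂gaussianReal 0 1 = ∫ x, h' x ∂gaussianReal 0 1 := by
  rw [integrable_gaussianReal_iff one_ne_zero] at hh hxh hh'
  simp only [integral_gaussianReal_eq_integral_smul one_ne_zero, smul_eq_mul]
  have parts := integral_mul_deriv_eq_deriv_mul_of_integrable
    (u := h) (v := gaussianPDFReal 0 1) (fun x _ ↦ hderiv x)
    (fun x _ ↦ hasDerivAt_gaussianPDFReal_zero_one x)
    (hxh.neg.congr (ae_of_all _ fun x ↦ by simp only [Pi.mul_apply, Pi.neg_apply]; ring))
    (hh'.congr (ae_of_all _ fun x ↦ by simp only [Pi.mul_apply]; ring))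
    (hh.congr (ae_of_all _ fun x ↦ by simp only [Pi.mul_apply]; ring))
  calc ∫ x, gaussianPDFReal 0 1 x * (x * h x) = -∫ x, h x * (-x * gaussianPDFReal 0 1 x) := by
        rw [← integral_neg]; congr with x; ring
    _ = ∫ x, gaussianPDFReal 0 1 x * h' x := by
        rw [parts, neg_neg]; congr with x; ring

lemma gaussianReal_map_const_add_const_mul (m σ : ℝ) :
    (gaussianReal 0 1).map (fun z ↦ m + σ * z) = gaussianReal m (σ ^ 2).toNNReal := by
  have hcomp : (fun z ↦ m + σ * z) = (m + ·) ∘ (σ * ·) := rfl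
  rw [hcomp, ← Measure.map_map (measurable_const_add m) (measurable_const_mul σ),
    gaussianReal_map_const_mul, gaussianReal_map_const_add]
  congr 1
  · simp
  · ext; simp [sq_nonneg]

lemma integral_gaussianPDFReal_mul_eq_integral_comp {m σ : ℝ} (hσ : σ ≠ 0) (f : ℝ → ℝ) :
    ∫ x, gaussianPDFReal m (σ ^ 2).toNNReal x * f x = ∫ z, f (m + σ * z) ∂gaussianReal 0 1 := by
  let e := (Homeomorph.mulLeft₀ σ hσ).trans (Homeomorph.addLeft m)
  have h := e.measurableEmbedding.integral_map (μ := gaussianReal 0 1) f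
  change ∫ x, f x ∂(gaussianReal 0 1).map (fun z ↦ m + σ * z) = ∫ z, f (m + σ * z) ∂_ at h
  rw [← h, gaussianReal_map_const_add_const_mul,
    integral_gaussianReal_eq_integral_smul (by simpa using hσ)]
  rfl

end ProbabilityTheory

noncomputable def logisticLoss (x : ℝ) : ℝ := logb 2 (1 + exp (-x))

lemma logisticLoss_zero : logisticLoss 0 = 1 := by
  norm_num [logisticLoss]

lemma logisticLoss_nonneg (x : ℝ) : 0 ≤ logisticLoss x :=
  logb_nonneg one_lt_two (by linarith [exp_pos (-x)])

@[fun_prop]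
lemma continuous_logisticLoss : Continuous logisticLoss :=
  (continuous_const.add (continuous_exp.comp continuous_neg)).logb
    (fun x ↦ (by positivity : 0 < 1 + exp (-x)).ne')

lemma antitone_logisticLoss : Antitone logisticLoss := fun _ _ hxy ↦
  logb_le_logb_of_le one_lt_two (by positivity) (by gcongr)

lemma logisticLoss_le (x : ℝ) : logisticLoss x ≤ 1 + |x| / log 2 := by
  have h : 1 + exp (-x) ≤ 2 * exp |x| := by
    linarith [one_le_exp (abs_nonneg x), exp_le_exp.2 (neg_le_abs x)]
  calc logisticLoss x ≤ logb 2 (2 * exp |x|) :=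
        logb_le_logb_of_le one_lt_two (by positivity) h
    _ = 1 + |x| / log 2 := by
        rw [logb_mul two_ne_zero (exp_ne_zero _), logb_self_eq_one one_lt_two, logb, log_exp]

lemma hasDerivAt_logisticLoss (x : ℝ) :
    HasDerivAt logisticLoss (-(1 - sigmoid x) / log 2) x := by
  have h : HasDerivAt (fun y ↦ 1 + exp (-y)) (-exp (-x)) x := by
    simpa using ((hasDerivAt_neg x).exp).const_add 1
  refine (h.log (by positivity)).div_const (log 2) |>.congr_deriv ?_
  rw [sigmoid_def]
  field_simp
  ring

lemma tendsto_logisticLoss_atTop : Tendsto logisticLoss atTop (𝓝 0) := by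
  have h : Tendsto (fun x ↦ 1 + exp (-x)) atTop (𝓝 1) := by
    simpa using (tendsto_exp_neg_atTop_nhds_zero.const_add 1)
  have h' := ((continuousAt_log one_ne_zero).tendsto.comp h).div_const (log 2)
  rwa [log_one, zero_div] at h'

noncomputable def expectedLogisticLoss (σ : ℝ) : ℝ :=
  ∫ z, logisticLoss (σ ^ 2 / 2 + σ * z) ∂gaussianReal 0 1

lemma Jfun_eq_one_sub_expectedLogisticLoss {σ : ℝ} (hσ : σ ≠ 0) :
    Jfun σ = 1 - expectedLogisticLoss σ := by
  rw [Jfun, integral_gaussianPDFReal_mul_eq_integral_comp hσ]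
  rfl

lemma expectedLogisticLoss_zero : expectedLogisticLoss 0 = 1 := by
  simp [expectedLogisticLoss, logisticLoss_zero]

lemma logisticLoss_le_logisticLoss_neg_sq_half (σ z : ℝ) :
    logisticLoss (σ ^ 2 / 2 + σ * z) ≤ logisticLoss (-(z ^ 2 / 2)) :=
  antitone_logisticLoss (by nlinarith [sq_nonneg (σ + z)])

lemma integrable_logisticLoss_neg_sq_half :
    Integrable (fun z ↦ logisticLoss (-(z ^ 2 / 2))) (gaussianReal 0 1) := by
  have hsq := (memLp_id_gaussianReal (μ := 0) (v := 1) 2).integrable_sq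
  refine ((integrable_const 1).add (hsq.div_const (2 * log 2))).mono'
    (by fun_prop) (ae_of_all _ fun z ↦ ?_)
  rw [norm_of_nonneg (logisticLoss_nonneg _)]
  refine (logisticLoss_le _).trans_eq ?_
  simp only [Pi.add_apply, id, abs_neg, abs_of_nonneg (by positivity : 0 ≤ z ^ 2 / 2)]
  ring

lemma integrable_logisticLoss_comp (σ : ℝ) :
    Integrable (fun z ↦ logisticLoss (σ ^ 2 / 2 + σ * z)) (gaussianReal 0 1) :=
  integrable_logisticLoss_neg_sq_half.mono' (by fun_prop) (ae_of_all _ fun z ↦ by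
    rw [norm_of_nonneg (logisticLoss_nonneg _)]
    exact logisticLoss_le_logisticLoss_neg_sq_half σ z)

lemma abs_one_sub_sigmoid_le_one (x : ℝ) : |1 - sigmoid x| ≤ 1 := by
  rw [abs_le]; constructor <;> linarith [sigmoid_pos x, sigmoid_lt_one x]

lemma hasDerivAt_expectedLogisticLoss (σ₀ : ℝ) :
    HasDerivAt expectedLogisticLoss
      (-(∫ z, (σ₀ + z) * (1 - sigmoid (σ₀ ^ 2 / 2 + σ₀ * z)) ∂gaussianReal 0 1) / log 2) σ₀ := by
  have hlog := log_pos one_lt_two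
  have hbound : Integrable (fun z ↦ (|σ₀| + 1 + |z|) / log 2) (gaussianReal 0 1) :=
    ((integrable_const _).add integrable_id_gaussianReal.abs).div_const _
  have key := hasDerivAt_integral_of_dominated_loc_of_deriv_le
    (F := fun σ z ↦ logisticLoss (σ ^ 2 / 2 + σ * z))
    (F' := fun σ z ↦ -((σ + z) * (1 - sigmoid (σ ^ 2 / 2 + σ * z))) / log 2)
    (Metric.ball_mem_nhds σ₀ one_pos) (Eventually.of_forall fun σ ↦ by fun_prop)
    (integrable_logisticLoss_comp σ₀) (by fun_prop) ?_ hbound ?_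
  · rw [integral_div, integral_neg] at key
    exact key.2
  · refine ae_of_all _ fun z σ hσ ↦ ?_
    have hσ' : |σ| ≤ |σ₀| + 1 := by
      have := abs_sub_abs_le_abs_sub σ σ₀
      rw [Metric.mem_ball, Real.dist_eq] at hσ
      linarith
    rw [norm_div, norm_neg, norm_mul, Real.norm_of_nonneg hlog.le]
    gcongr
    calc ‖σ + z‖ * ‖1 - sigmoid (σ ^ 2 / 2 + σ * z)‖ ≤ ‖σ + z‖ * 1 := by
          gcongr; exact abs_one_sub_sigmoid_le_one _
      _ ≤ |σ₀| + 1 + |z| := by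
          rw [mul_one, Real.norm_eq_abs]; linarith [abs_add_le σ z]
  · refine ae_of_all _ fun z σ _ ↦ ?_
    have hinner : HasDerivAt (fun σ ↦ σ ^ 2 / 2 + σ * z) (σ + z) σ :=
      (((hasDerivAt_pow 2 σ).div_const 2).add ((hasDerivAt_id σ).mul_const z)).congr_deriv
        (by ring)
    exact ((hasDerivAt_logisticLoss _).comp σ hinner).congr_deriv (by ring)

lemma integral_add_mul_one_sub_sigmoid (m σ : ℝ) :
    ∫ z, (σ + z) * (1 - sigmoid (m + σ * z)) ∂gaussianReal 0 1
      = σ * ∫ z, (1 - sigmoid (m + σ * z)) ^ 2 ∂gaussianReal 0 1 := by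
  set h := fun z ↦ 1 - sigmoid (m + σ * z)
  have hcont : Continuous h := by unfold h; fun_prop
  have hbdd : ∀ z, |h z| ≤ 1 := fun z ↦ abs_one_sub_sigmoid_le_one _
  have hint : ∀ {f : ℝ → ℝ}, Continuous f → (∀ z, |f z| ≤ 1) → Integrable f (gaussianReal 0 1) :=
    fun hf hf1 ↦ Integrable.of_bound hf.aestronglyMeasurable 1 (ae_of_all _ hf1)
  have hsh : ∀ z, |sigmoid (m + σ * z) * h z| ≤ 1 := fun z ↦ by
    rw [abs_mul, abs_of_pos (sigmoid_pos _)]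
    exact mul_le_one₀ (sigmoid_le_one _) (abs_nonneg _) (hbdd z)
  have hzh : Integrable (fun z ↦ z * h z) (gaussianReal 0 1) :=
    integrable_id_gaussianReal.mul_bdd hcont.aestronglyMeasurable (ae_of_all _ hbdd)
  have hderiv : ∀ z, HasDerivAt h (-σ * (sigmoid (m + σ * z) * h z)) z := fun z ↦ by
    have hinner : HasDerivAt (fun z ↦ m + σ * z) σ z := by
      simpa using ((hasDerivAt_id z).const_mul σ).const_add m
    exact ((hasDerivAt_sigmoid _).comp z hinner).const_sub 1 |>.congr_deriv (by ring)
  have stein := integral_mul_gaussianReal_eq_integral_deriv hderiv (hint hcont hbdd) hzh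
    ((hint (by fun_prop) hsh).const_mul (-σ))
  have hsplit : ∫ z, (σ + z) * h z ∂gaussianReal 0 1
      = σ * ∫ z, h z ∂gaussianReal 0 1 + ∫ z, z * h z ∂gaussianReal 0 1 := by
    rw [← integral_const_mul, ← integral_add ((hint hcont hbdd).const_mul σ) hzh]
    congr with z; ring
  have hsq : ∫ z, h z ^ 2 ∂gaussianReal 0 1
      = ∫ z, h z ∂gaussianReal 0 1 - ∫ z, sigmoid (m + σ * z) * h z ∂gaussianReal 0 1 := by
    rw [← integral_sub (hint hcont hbdd) (hint (by fun_prop) hsh)]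
    congr with z; simp only [h]; ring
  rw [hsplit, stein, integral_const_mul, hsq]
  ring

lemma integral_one_sub_sigmoid_sq_pos (m σ : ℝ) :
    0 < ∫ z, (1 - sigmoid (m + σ * z)) ^ 2 ∂gaussianReal 0 1 := by
  have hint : Integrable (fun z ↦ (1 - sigmoid (m + σ * z)) ^ 2) (gaussianReal 0 1) :=
    Integrable.of_bound (by fun_prop) 1 (ae_of_all _ fun z ↦ by
      rw [norm_pow, Real.norm_eq_abs]
      exact pow_le_one₀ (abs_nonneg _) (abs_one_sub_sigmoid_le_one _))
  have hsupp : Function.support (fun z ↦ (1 - sigmoid (m + σ * z)) ^ 2) = univ :=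
    Function.support_eq_univ fun z ↦ pow_ne_zero 2 (sub_ne_zero.2 (sigmoid_lt_one _).ne')
  rw [integral_pos_iff_support_of_nonneg (fun z ↦ sq_nonneg _) hint, hsupp]
  simp

lemma strictAntiOn_expectedLogisticLoss : StrictAntiOn expectedLogisticLoss (Ioi 0) := by
  refine strictAntiOn_of_hasDerivWithinAt_neg (convex_Ioi 0)
    (fun σ _ ↦ (hasDerivAt_expectedLogisticLoss σ).continuousAt.continuousWithinAt)
    (fun σ _ ↦ (hasDerivAt_expectedLogisticLoss σ).hasDerivWithinAt) fun σ hσ ↦ ?_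
  rw [interior_Ioi] at hσ
  rw [integral_add_mul_one_sub_sigmoid]
  exact div_neg_of_neg_of_pos (neg_neg_of_pos (mul_pos hσ (integral_one_sub_sigmoid_sq_pos _ _)))
    (log_pos one_lt_two)

lemma tendsto_expectedLogisticLoss_atTop : Tendsto expectedLogisticLoss atTop (𝓝 0) := by
  have h := tendsto_integral_filter_of_dominated_convergence
    (F := fun σ z ↦ logisticLoss (σ ^ 2 / 2 + σ * z)) (f := fun _ ↦ 0) (l := atTop)
    (μ := gaussianReal 0 1) _ (Eventually.of_forall fun σ ↦ by fun_prop)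
    (Eventually.of_forall fun σ ↦ ae_of_all _ fun z ↦ by
      rw [norm_of_nonneg (logisticLoss_nonneg _)]
      exact logisticLoss_le_logisticLoss_neg_sq_half σ z)
    integrable_logisticLoss_neg_sq_half (ae_of_all _ fun z ↦ ?_)
  · rwa [integral_zero] at h
  · have hinner : Tendsto (fun σ : ℝ ↦ σ ^ 2 / 2 + σ * z) atTop atTop := by
      have := tendsto_id.atTop_mul_atTop₀
        (tendsto_atTop_add_const_right _ z (tendsto_id.atTop_div_const two_pos))
      exact this.congr fun σ ↦ by simp only [id]; ring
    exact tendsto_logisticLoss_atTop.comp hinner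

/-- the J-function is strictly increasing on `(0,∞)`, tends to `0`
as `σ → 0⁺` and tends to `1` as `σ → ∞`. -/
theorem Jfun_strictMono_and_limits :
    StrictMonoOn Jfun (Set.Ioi (0 : ℝ)) ∧
    Filter.Tendsto Jfun (nhdsWithin 0 (Set.Ioi (0 : ℝ))) (nhds 0) ∧
    Filter.Tendsto Jfun Filter.atTop (nhds 1) := by
  have hJ : ∀ σ ∈ Ioi (0 : ℝ), 1 - expectedLogisticLoss σ = Jfun σ := fun σ hσ ↦
    (Jfun_eq_one_sub_expectedLogisticLoss (ne_of_gt hσ)).symm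
  refine ⟨fun a ha b hb hab ↦ ?_, ?_, ?_⟩
  · rw [← hJ a ha, ← hJ b hb]
    linarith [strictAntiOn_expectedLogisticLoss ha hb hab]
  · have h := ((hasDerivAt_expectedLogisticLoss 0).continuousAt.tendsto.mono_left
      (nhdsWithin_le_nhds (s := Ioi 0))).const_sub 1
    rw [expectedLogisticLoss_zero, sub_self] at h
    exact h.congr' (eventually_nhdsWithin_of_forall hJ)
  · have h := tendsto_expectedLogisticLoss_atTop.const_sub 1
    rw [sub_zero] at h
    exact h.congr' ((eventually_gt_atTop 0).mono hJ)
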